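/- arXiv:2109.08170 — 2 statements merged into one kernel-verified Lean document; each statement's English description precedes it below -/
import Mathlib

section
/- For x ∈ {0,1} and angles α, β ∈ (0, π), the 4×4 unitary matrix U_⊛(α,β) with entries determined by a_± = (cos((α−β)/2) ± cos((α+β)/2)) / (2|cos((α⊛β)/2)|) and b_± = (sin((α+β)/2) ± sin((α−β)/2)) / (2|sin((α⊛β)/2)|), applied to the vector |x;α⟩ ⊗ |x;β⟩ where |x;θ⟩ = cos(θ/2)|0⟩ + (−1)^x sin(θ/2)|1⟩, yields |x; α⊛β⟩ ⊗ |0⟩. -/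
open Real

/-- The equality-node angle `α ⊛ β := arccos (cos α * cos β)`. -/
noncomputable def ostar (α β : ℝ) : ℝ := Real.arccos (Real.cos α * Real.cos β)

/-- `a₊` and `a₋` (via sign `s = ±1`). -/
noncomputable def aCoef (s : ℝ) (α β : ℝ) : ℝ :=
  (Real.cos ((α - β) / 2) + s * Real.cos ((α + β) / 2)) / (2 * |Real.cos (ostar α β / 2)|)

/-- `b₊` and `b₋` (via sign `s = ±1`). -/
noncomputable def bCoef (s : ℝ) (α β : ℝ) : ℝ :=
  (Real.sin ((α + β) / 2) + s * Real.sin ((α - β) / 2)) / (2 * |Real.sin (ostar α β / 2)|)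

/-- The 4×4 equality-node unitary `U_⊛(α, β)`, in the computational basis
`|00⟩, |01⟩, |10⟩, |11⟩`. -/
noncomputable def Ustar (α β : ℝ) : Matrix (Fin 4) (Fin 4) ℝ :=
  !![aCoef 1 α β, 0, 0, aCoef (-1) α β;
     -aCoef (-1) α β, 0, 0, aCoef 1 α β;
     0, bCoef (-1) α β, bCoef 1 α β, 0;
     0, bCoef 1 α β, -bCoef (-1) α β, 0]

/-- The qubit state `|x; θ⟩ = cos(θ/2)|0⟩ + (-1)^x sin(θ/2)|1⟩`. -/
noncomputable def qubit (x : Fin 2) (θ : ℝ) : Fin 2 → ℝ :=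
  ![Real.cos (θ / 2), (-1 : ℝ) ^ (x : ℕ) * Real.sin (θ / 2)]

/-- Tensor product of two single-qubit vectors, in the basis `|00⟩,|01⟩,|10⟩,|11⟩`. -/
def tens (a b : Fin 2 → ℝ) : Fin 4 → ℝ :=
  ![a 0 * b 0, a 0 * b 1, a 1 * b 0, a 1 * b 1]

/-!
Write `cα, sα` for `cos (α/2), sin (α/2)` and `c, s` for the half-angle cosine and sine of
`α ⊛ β`. Since `cos (α ⊛ β) = cos α cos β`, the double-angle formula gives
`c² = cα² cβ² + sα² sβ²` and `s² = cα² sβ² + sα² cβ²`, while the addition formulas turn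
`a₊, a₋, b₊, b₋` into `cα cβ / |c|, sα sβ / |c|, sα cβ / |s|, cα sβ / |s|`. As soon as
`|cos α| < 1` we have `α ⊛ β ∈ (0, π)`, so `c, s > 0`, and the rows of `U_⊛` send
`(cα cβ, ± cα sβ, ± sα cβ, sα sβ)` to `(c, 0, ± s, 0)`.
-/

lemma cos_eq_cos_half_sq_sub_sin_half_sq (x : ℝ) : cos x = cos (x / 2) ^ 2 - sin (x / 2) ^ 2 := by
  rw [← cos_two_mul', mul_div_cancel₀ x two_ne_zero]

lemma abs_cos_lt_one_of_mem_Ioo {x : ℝ} (hx : x ∈ Set.Ioo 0 π) : |cos x| < 1 := by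
  rw [← sq_lt_one_iff_abs_lt_one, cos_sq']
  linarith [pow_pos (sin_pos_of_pos_of_lt_pi hx.1 hx.2) 2]

lemma cos_ostar (α β : ℝ) : cos (ostar α β) = cos α * cos β := by
  have h : |cos α * cos β| ≤ 1 := by
    rw [abs_mul]; exact mul_le_one₀ (abs_cos_le_one α) (abs_nonneg _) (abs_cos_le_one β)
  exact cos_arccos (abs_le.mp h).1 (abs_le.mp h).2

lemma ostar_mem_Ioo {α : ℝ} (hα : |cos α| < 1) (β : ℝ) : ostar α β ∈ Set.Ioo 0 π := by
  have h : |cos α * cos β| < 1 := by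
    rw [abs_mul]; exact mul_lt_one_of_nonneg_of_lt_one_left (abs_nonneg _) hα (abs_cos_le_one β)
  exact ⟨arccos_pos.mpr (abs_lt.mp h).2, arccos_lt_pi.mpr (abs_lt.mp h).1⟩

lemma cos_half_ostar_sq (α β : ℝ) : cos (ostar α β / 2) ^ 2 =
    cos (α / 2) ^ 2 * cos (β / 2) ^ 2 + sin (α / 2) ^ 2 * sin (β / 2) ^ 2 := by
  have h := cos_ostar α β
  rw [cos_eq_cos_half_sq_sub_sin_half_sq (ostar α β), cos_eq_cos_half_sq_sub_sin_half_sq α,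
    cos_eq_cos_half_sq_sub_sin_half_sq β] at h
  linear_combination (h + sin_sq_add_cos_sq (ostar α β / 2) - sin_sq_add_cos_sq (β / 2)
    - sin_sq_add_cos_sq (α / 2) * (sin (β / 2) ^ 2 + cos (β / 2) ^ 2)) / 2

lemma sin_half_ostar_sq (α β : ℝ) : sin (ostar α β / 2) ^ 2 =
    cos (α / 2) ^ 2 * sin (β / 2) ^ 2 + sin (α / 2) ^ 2 * cos (β / 2) ^ 2 := by
  have h := cos_ostar α β
  rw [cos_eq_cos_half_sq_sub_sin_half_sq (ostar α β), cos_eq_cos_half_sq_sub_sin_half_sq α,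
    cos_eq_cos_half_sq_sub_sin_half_sq β] at h
  linear_combination (-h + sin_sq_add_cos_sq (ostar α β / 2) - sin_sq_add_cos_sq (β / 2)
    - sin_sq_add_cos_sq (α / 2) * (sin (β / 2) ^ 2 + cos (β / 2) ^ 2)) / 2

lemma aCoef_one (α β : ℝ) :
    aCoef 1 α β = cos (α / 2) * cos (β / 2) / |cos (ostar α β / 2)| := by
  rw [aCoef, sub_div α, add_div α, cos_sub, cos_add]; ring

lemma aCoef_neg_one (α β : ℝ) :
    aCoef (-1) α β = sin (α / 2) * sin (β / 2) / |cos (ostar α β / 2)| := by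
  rw [aCoef, sub_div α, add_div α, cos_sub, cos_add]; ring

lemma bCoef_one (α β : ℝ) :
    bCoef 1 α β = sin (α / 2) * cos (β / 2) / |sin (ostar α β / 2)| := by
  rw [bCoef, sub_div α, add_div α, sin_sub, sin_add]; ring

lemma bCoef_neg_one (α β : ℝ) :
    bCoef (-1) α β = cos (α / 2) * sin (β / 2) / |sin (ostar α β / 2)| := by
  rw [bCoef, sub_div α, add_div α, sin_sub, sin_add]; ring

lemma Ustar_mulVec (α β : ℝ) (v : Fin 4 → ℝ) : (Ustar α β).mulVec v =
    ![aCoef 1 α β * v 0 + aCoef (-1) α β * v 3, -aCoef (-1) α β * v 0 + aCoef 1 α β * v 3,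
      bCoef (-1) α β * v 1 + bCoef 1 α β * v 2, bCoef 1 α β * v 1 - bCoef (-1) α β * v 2] := by
  ext i
  fin_cases i <;> simp [Ustar, Matrix.mulVec, dotProduct, Fin.sum_univ_four, sub_eq_add_neg]

theorem Ustar_apply_general (α β : ℝ) (hα : α ∈ Set.Ioo 0 π)
    (x : Fin 2) :
    (Ustar α β).mulVec (tens (qubit x α) (qubit x β)) =
      tens (qubit x (ostar α β)) ![1, 0] := by
  obtain ⟨hθ0, hθπ⟩ := ostar_mem_Ioo (abs_cos_lt_one_of_mem_Ioo hα) β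
  have hc : 0 < cos (ostar α β / 2) := cos_pos_of_mem_Ioo ⟨by linarith [pi_pos], by linarith⟩
  have hs : 0 < sin (ostar α β / 2) :=
    sin_pos_of_pos_of_lt_pi (by linarith) (by linarith [pi_pos])
  have hc2 := cos_half_ostar_sq α β
  have hs2 := sin_half_ostar_sq α β
  rw [Ustar_mulVec, aCoef_one, aCoef_neg_one, bCoef_one, bCoef_neg_one, abs_of_pos hc,
    abs_of_pos hs]
  ext i
  fin_cases x <;> fin_cases i <;> simp [tens, qubit] <;> field_simp <;> grind

/-- Applying `U_⊛(α, β)` to `|x;α⟩ ⊗ |x;β⟩` yields `|x; α⊛β⟩ ⊗ |0⟩`. -/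
theorem Ustar_apply (α β : ℝ) (hα : α ∈ Set.Ioo 0 π) (hβ : β ∈ Set.Ioo 0 π)
    (x : Fin 2) :
    (Ustar α β).mulVec (tens (qubit x α) (qubit x β)) =
      tens (qubit x (ostar α β)) ![1, 0] :=
  Ustar_apply_general α β hα x
end

section
/- Let S = {|φ_i⟩}_{i=1}^m be a set of linearly independent unit vectors in a finite-dimensional complex Hilbert space, forming a geometrically uniform set: S = {U|φ⟩ : U ∈ G} for a fixed unit vector |φ⟩ and a finite abelian group G of unitaries. Then the pretty-good measurement vectors |f_i⟩ := (1/√m) ρ^{−1/2} |φ_i⟩, where ρ := (1/m) Σ_i |φ_i⟩⟨φ_i| and the inverse square root is taken on the support of ρ, form an orthonormal set. -/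
/-!
Let `A` be the matrix whose columns are the `φ i`, so that `m • ρ = A * Aᴴ`. Linear independence
makes `A` cancellable on the left and `Aᴴ` on the right, so the Penrose identity
`ρ * (S * S) * ρ = ρ` cancels down to `Aᴴ * (S * S) * A = m • 1`. As `S` is Hermitian, the left
side is the Gram matrix of the vectors `S φ i`, so the `f i = (√m)⁻¹ • S φ i` are orthonormal.
-/

namespace Matrix

variable {m n p R : Type*} [Fintype n]

theorem mul_left_cancel_of_mulVec_injective [Semiring R] [Fintype p] [DecidableEq p]
    {A : Matrix m n R} (hA : Function.Injective A.mulVec) {X Y : Matrix n p R}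
    (h : A * X = A * Y) : X = Y :=
  ext_of_mulVec_single fun j => hA <| by rw [mulVec_mulVec, mulVec_mulVec, h]

theorem mul_conjTranspose_right_cancel_of_mulVec_injective [Semiring R] [StarRing R]
    [Fintype p] [DecidableEq p] {A : Matrix m n R} (hA : Function.Injective A.mulVec)
    {X Y : Matrix p n R} (h : X * Aᴴ = Y * Aᴴ) : X = Y :=
  conjTranspose_injective <| mul_left_cancel_of_mulVec_injective hA <| by
    simpa only [conjTranspose_mul, conjTranspose_conjTranspose] using congrArg conjTranspose h

theorem mul_conjTranspose_eq_sum_vecMulVec [Semiring R] [StarRing R] (A : Matrix m n R) :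
    A * Aᴴ = ∑ k, vecMulVec (A.col k) (star (A.col k)) := by
  ext a b
  simp [mul_apply, vecMulVec_apply, sum_apply]

theorem conjTranspose_mul_mul_eq_inv_smul_one [Field R] [StarRing R] [Fintype m]
    [DecidableEq m] [DecidableEq n] {A : Matrix m n R} (hA : Function.Injective A.mulVec)
    {B : Matrix m m R} {c : R} (hc : c ≠ 0)
    (h : (c • (A * Aᴴ)) * B * (c • (A * Aᴴ)) = c • (A * Aᴴ)) :
    Aᴴ * B * A = c⁻¹ • 1 := by
  have hcancel : c • (A * (Aᴴ * B * A) * Aᴴ) = A * Aᴴ := by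
    apply smul_right_injective _ hc
    change c • c • _ = c • _
    rw [smul_smul, ← h]
    simp only [Matrix.smul_mul, Matrix.mul_smul, smul_smul, Matrix.mul_assoc]
  refine mul_left_cancel_of_mulVec_injective hA <|
    mul_conjTranspose_right_cancel_of_mulVec_injective hA ?_
  rw [Matrix.mul_smul, Matrix.mul_one, Matrix.smul_mul, ← hcancel, smul_smul, inv_mul_cancel₀ hc,
    one_smul]

theorem inner_toLp_col [RCLike R] [Fintype m] {k : Type*} (A : Matrix m k R) (i j : k) :
    inner R (WithLp.toLp 2 (A.col i)) (WithLp.toLp 2 (A.col j)) = (Aᴴ * A) i j := by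
  simp [EuclideanSpace.inner_toLp_toLp, mul_apply, dotProduct, mul_comm]

theorem col_mul [NonUnitalNonAssocSemiring R] {k : Type*} (M : Matrix m n R)
    (N : Matrix n k R) (j : k) : (M * N).col j = M *ᵥ N.col j := by
  ext i
  simp [mul_apply, mulVec, dotProduct]

end Matrix

open scoped ComplexOrder
open Matrix

theorem pgm_orthonormal_general (d m : ℕ)
    (φ : Fin m → EuclideanSpace ℂ (Fin d))
    (hli : LinearIndependent ℂ φ)
    (ρ S : Matrix (Fin d) (Fin d) ℂ)
    (hρ : ρ = ((m : ℂ))⁻¹ •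
      ∑ i, Matrix.vecMulVec (φ i) (fun a => (starRingEnd ℂ) (φ i a)))
    (hS : S.PosSemidef)
    (hpen₁ : ρ * (S * S) * ρ = ρ)
    (f : Fin m → EuclideanSpace ℂ (Fin d))
    (hf : ∀ i, f i = ((Real.sqrt m : ℂ))⁻¹ •
      (WithLp.toLp 2 (S.mulVec (φ i)) : EuclideanSpace ℂ (Fin d))) :
    ∀ i j, (inner ℂ (f i) (f j) : ℂ) = if i = j then 1 else 0 := by
  intro i j
  have hm : (m : ℂ) ≠ 0 := Nat.cast_ne_zero.2 i.pos.ne'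
  set A : Matrix (Fin d) (Fin m) ℂ := (of fun k => (φ k).ofLp)ᵀ
  have hA : Function.Injective A.mulVec := by
    rw [mulVec_injective_iff]
    exact hli.map' (WithLp.linearEquiv 2 ℂ (Fin d → ℂ)).toLinearMap (LinearEquiv.ker _)
  have hρA : ρ = (m : ℂ)⁻¹ • (A * Aᴴ) := by
    rw [hρ, mul_conjTranspose_eq_sum_vecMulVec]
    rfl
  have hgram : (S * A)ᴴ * (S * A) = (m : ℂ) • 1 := by
    rw [hρA] at hpen₁
    have h := conjTranspose_mul_mul_eq_inv_smul_one hA (inv_ne_zero hm) hpen₁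
    rw [inv_inv] at h
    rw [conjTranspose_mul, hS.isHermitian.eq, ← h]
    simp only [Matrix.mul_assoc]
  have hSφ : ∀ k, S *ᵥ φ k = (S * A).col k := fun k => (col_mul S A k).symm
  rw [hf, hf, inner_smul_left, inner_smul_right, hSφ, hSφ, inner_toLp_col, hgram,
    Matrix.smul_apply, one_apply, map_inv₀, Complex.conj_ofReal, ← mul_assoc, ← mul_inv]
  have hsqrt : ((√m : ℝ) : ℂ) * (√m : ℝ) = m := by
    exact_mod_cast Real.mul_self_sqrt (Nat.cast_nonneg m)
  split_ifs <;> simp [hsqrt, hm]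

/-- **Orthogonality of the pretty-good measurement for geometrically uniform
linearly independent states.** Let `φ₁, …, φ_m` be linearly independent unit
vectors in `ℂ^d` forming a geometrically uniform set (the orbit of a unit
vector `ψ` under a finite abelian group of unitaries). Let
`ρ = (1/m) Σ |φ_i⟩⟨φ_i|` and let `S = ρ^{-1/2}` be the positive-semidefinite
square root of the Moore–Penrose pseudoinverse of `ρ` (characterized by the
four Penrose conditions for `S * S`). Then the pretty-good measurement vectors
`f_i = (1/√m) S φ_i` form an orthonormal set. -/
theorem pgm_orthonormal (d m : ℕ)
    (φ : Fin m → EuclideanSpace ℂ (Fin d))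
    (hunit : ∀ i, ‖φ i‖ = 1)
    (hli : LinearIndependent ℂ φ)
    (hgu : ∃ G : Subgroup (Matrix.unitaryGroup (Fin d) ℂ),
      Finite G ∧ (∀ U V : G, U * V = V * U) ∧
      ∃ ψ : EuclideanSpace ℂ (Fin d), ‖ψ‖ = 1 ∧
        Set.range φ =
          Set.range (fun U : G => (WithLp.toLp 2 ((U : Matrix (Fin d) (Fin d) ℂ).mulVec ψ) :
            EuclideanSpace ℂ (Fin d))))
    (ρ S : Matrix (Fin d) (Fin d) ℂ)
    (hρ : ρ = ((m : ℂ))⁻¹ •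
      ∑ i, Matrix.vecMulVec (φ i) (fun a => (starRingEnd ℂ) (φ i a)))
    (hS : S.PosSemidef)
    (hpen₁ : ρ * (S * S) * ρ = ρ)
    (hpen₂ : (S * S) * ρ * (S * S) = S * S)
    (hpen₃ : (ρ * (S * S)).IsHermitian)
    (hpen₄ : ((S * S) * ρ).IsHermitian)
    (f : Fin m → EuclideanSpace ℂ (Fin d))
    (hf : ∀ i, f i = ((Real.sqrt m : ℂ))⁻¹ •
      (WithLp.toLp 2 (S.mulVec (φ i)) : EuclideanSpace ℂ (Fin d))) :
    ∀ i j, (inner ℂ (f i) (f j) : ℂ) = if i = j then 1 else 0 :=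
  pgm_orthonormal_general d m φ hli ρ S hρ hS hpen₁ f hf
end
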